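/- Let $m, v, \zeta > 0$ be fixed, let $\tilde\omega > 0$, and define for each admissible $\sigma > 0$ (with $\tilde\omega^{-1} < \sigma m v$) the quantity $z_{\tilde\omega,\sigma}(\zeta)$ as the unique $z > \zeta$ solving $(z-\zeta)\sigma m v (\sigma^4 m^2 v^2 + z^2)^{-1/2} = \tilde\omega^{-1}$. Then for any admissible $\sigma_2 \le \sigma \le \sigma_1$ one has $z_{\tilde\omega, \sigma}(\zeta) \le \max\bigl(z_{\tilde\omega,\sigma_1}(\zeta),\, z_{\tilde\omega,\sigma_2}(\zeta)\bigr)$. -/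

import Mathlib

open Real

/-!
The defining equation of `z_{ω,σ}` reads `(z - ζ) ρ(σ, z) = ω⁻¹`, whose left side is strictly
increasing in `z ≥ ζ`. If `z_{ω,σ}` exceeded both `z_{ω,σ₁}` and `z_{ω,σ₂}`, monotonicity
at `z = z_{ω,σ}` would give `ρ(σ, z) < ρ(σ₁, z)` and `ρ(σ, z) < ρ(σ₂, z)`. This is impossible because
`σ ↦ ρ(σ, z)` is unimodal: `ρ(σ, z) < ρ(σ', z)` exactly when `σ'² - σ²` and `z² - (σ σ' m v)²` have
the same strict sign.
-/

noncomputable def rho (m v σ z : ℝ) : ℝ :=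
  σ * m * v / √(σ ^ 4 * m ^ 2 * v ^ 2 + z ^ 2)

section Rho

variable {m v σ σ' z : ℝ}

lemma sub_mul_div_sqrt_eq_sub_mul_rho (ζ : ℝ) :
    (z - ζ) * (σ * m * v) / √(σ ^ 4 * m ^ 2 * v ^ 2 + z ^ 2) = (z - ζ) * rho m v σ z :=
  mul_div_assoc _ _ _

lemma rho_denom_pos (h : σ * m * v ≠ 0) : 0 < σ ^ 4 * m ^ 2 * v ^ 2 + z ^ 2 := by
  have hσ : σ ≠ 0 := by rintro rfl; simp at h
  rw [show σ ^ 4 * m ^ 2 * v ^ 2 = (σ * m * v) ^ 2 * σ ^ 2 by ring]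
  positivity

lemma rho_nonneg (h : 0 ≤ σ * m * v) : 0 ≤ rho m v σ z :=
  div_nonneg h (sqrt_nonneg _)

lemma rho_sq : rho m v σ z ^ 2 = (σ * m * v) ^ 2 / (σ ^ 4 * m ^ 2 * v ^ 2 + z ^ 2) := by
  rw [rho, div_pow, sq_sqrt (by positivity)]

lemma rho_lt_rho_iff (hmv : 0 < m * v) (hσ : 0 < σ) (hσ' : 0 < σ') :
    rho m v σ z < rho m v σ' z ↔ 0 < (σ' ^ 2 - σ ^ 2) * (z ^ 2 - (σ * σ' * m * v) ^ 2) := by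
  have hσmv : 0 < σ * m * v := by rw [mul_assoc]; positivity
  have hσ'mv : 0 < σ' * m * v := by rw [mul_assoc]; positivity
  rw [← pow_lt_pow_iff_left₀ (rho_nonneg hσmv.le) (rho_nonneg hσ'mv.le) two_ne_zero,
    rho_sq, rho_sq, div_lt_div_iff₀ (rho_denom_pos hσmv.ne') (rho_denom_pos hσ'mv.ne'), ← sub_pos]
  have : (σ' * m * v) ^ 2 * (σ ^ 4 * m ^ 2 * v ^ 2 + z ^ 2)
        - (σ * m * v) ^ 2 * (σ' ^ 4 * m ^ 2 * v ^ 2 + z ^ 2)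
      = (m * v) ^ 2 * ((σ' ^ 2 - σ ^ 2) * (z ^ 2 - (σ * σ' * m * v) ^ 2)) := by
    ring
  rw [this, mul_pos_iff_of_pos_left (pow_pos hmv 2)]

lemma min_rho_le_rho (hmv : 0 < m * v) {σ₁ σ₂ : ℝ} (hσ₂ : 0 < σ₂) (h₂ : σ₂ ≤ σ) (h₁ : σ ≤ σ₁) :
    min (rho m v σ₁ z) (rho m v σ₂ z) ≤ rho m v σ z := by
  by_contra! h
  have hσ : 0 < σ := hσ₂.trans_le h₂
  have hpos₁ := (rho_lt_rho_iff hmv hσ (hσ.trans_le h₁)).mp (lt_min_iff.mp h).1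
  have hpos₂ := (rho_lt_rho_iff hmv hσ hσ₂).mp (lt_min_iff.mp h).2
  have hsq₁ : σ ^ 2 ≤ σ₁ ^ 2 := pow_le_pow_left₀ hσ.le h₁ 2
  have hsq₂ : σ₂ ^ 2 ≤ σ ^ 2 := pow_le_pow_left₀ hσ₂.le h₂ 2
  have hbig : (σ * σ₁ * m * v) ^ 2 < z ^ 2 := by
    by_contra! h'
    exact hpos₁.not_ge (mul_nonpos_of_nonneg_of_nonpos (by linarith) (by linarith))
  have hsmall : z ^ 2 < (σ * σ₂ * m * v) ^ 2 := by
    by_contra! h'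
    exact hpos₂.not_ge (mul_nonpos_of_nonpos_of_nonneg (by linarith) (by linarith))
  have hmono := mul_le_mul_of_nonneg_right (hsq₂.trans hsq₁) (sq_nonneg (σ * m * v))
  linarith

lemma sq_sub_mul_add_sq_lt {B ζ z z' : ℝ} (hB : 0 ≤ B) (hζ : 0 < ζ) (hz : ζ ≤ z) (hzz' : z < z') :
    (z - ζ) ^ 2 * (B + z' ^ 2) < (z' - ζ) ^ 2 * (B + z ^ 2) := by
  have key : (z' - ζ) ^ 2 * (B + z ^ 2) - (z - ζ) ^ 2 * (B + z' ^ 2)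
      = B * (z' - z) * (z' - ζ + (z - ζ)) + ζ * (z' - z) * ((z' - ζ) * z + (z - ζ) * z') := by
    ring
  have : 0 < ζ * (z' - z) * ((z' - ζ) * z + (z - ζ) * z') := by
    have : 0 < (z' - ζ) * z := mul_pos (by linarith) (by linarith)
    have : 0 ≤ (z - ζ) * z' := mul_nonneg (by linarith) (by linarith)
    have : 0 < z' - z := by linarith
    positivity
  have : 0 ≤ B * (z' - z) * (z' - ζ + (z - ζ)) :=
    mul_nonneg (mul_nonneg hB (by linarith)) (by linarith)
  linarith

lemma strictMonoOn_sub_mul_rho {ζ : ℝ} (hζ : 0 < ζ) (hσmv : 0 < σ * m * v) :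
    StrictMonoOn (fun z ↦ (z - ζ) * rho m v σ z) (Set.Ici ζ) := by
  intro z (hz : ζ ≤ z) z' _ hzz'
  refine lt_of_pow_lt_pow_left₀ 2
    (mul_nonneg (by linarith) (rho_nonneg hσmv.le)) ?_
  simp only [mul_pow, rho_sq]
  rw [← mul_div_assoc, ← mul_div_assoc,
    div_lt_div_iff₀ (rho_denom_pos hσmv.ne') (rho_denom_pos hσmv.ne')]
  have := mul_lt_mul_of_pos_left
    (sq_sub_mul_add_sq_lt (B := σ ^ 4 * m ^ 2 * v ^ 2) (by positivity) hζ hz hzz')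
    (pow_pos hσmv 2)
  linarith

end Rho

theorem z_omega_sigma_max_at_endpoints_general (m v ζ ω σ σ1 σ2 zs z1 z2 : ℝ)
    (hm : 0 < m) (hv : 0 < v) (hζ : 0 < ζ)
    (hσ1 : 0 < σ1) (hσ2 : 0 < σ2)
    (hord : σ2 ≤ σ ∧ σ ≤ σ1)
    (hzs : ζ < zs)
    (heqs : (zs - ζ) * (σ * m * v) / Real.sqrt (σ ^ 4 * m ^ 2 * v ^ 2 + zs ^ 2) = ω⁻¹)
    (hz1 : ζ < z1)
    (heq1 : (z1 - ζ) * (σ1 * m * v) / Real.sqrt (σ1 ^ 4 * m ^ 2 * v ^ 2 + z1 ^ 2) = ω⁻¹)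
    (hz2 : ζ < z2)
    (heq2 : (z2 - ζ) * (σ2 * m * v) / Real.sqrt (σ2 ^ 4 * m ^ 2 * v ^ 2 + z2 ^ 2) = ω⁻¹) :
    zs ≤ max z1 z2 := by
  simp only [sub_mul_div_sqrt_eq_sub_mul_rho] at heqs heq1 heq2
  by_contra! hmax
  have rho_lt {σ' z' : ℝ} (hσ' : 0 < σ') (hz' : ζ < z') (hz's : z' < zs)
      (heq : (z' - ζ) * rho m v σ' z' = ω⁻¹) : rho m v σ zs < rho m v σ' zs := by
    have := strictMonoOn_sub_mul_rho (σ := σ') hζ (by positivity : 0 < σ' * m * v)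
      hz'.le hzs.le hz's
    exact lt_of_mul_lt_mul_left (by rwa [heqs, ← heq]) (sub_pos.mpr hzs).le
  exact (min_rho_le_rho (mul_pos hm hv) hσ2 hord.1 hord.2).not_gt <|
    lt_min (rho_lt hσ1 hz1 (le_max_left _ _ |>.trans_lt hmax) heq1)
      (rho_lt hσ2 hz2 (le_max_right _ _ |>.trans_lt hmax) heq2)

theorem z_omega_sigma_max_at_endpoints (m v ζ ω σ σ1 σ2 zs z1 z2 : ℝ)
    (hm : 0 < m) (hv : 0 < v) (hζ : 0 < ζ) (hω : 0 < ω)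
    (hσ : 0 < σ) (hσ1 : 0 < σ1) (hσ2 : 0 < σ2)
    (hadm : ω⁻¹ < σ * m * v) (hadm1 : ω⁻¹ < σ1 * m * v) (hadm2 : ω⁻¹ < σ2 * m * v)
    (hord : σ2 ≤ σ ∧ σ ≤ σ1)
    (hzs : ζ < zs)
    (heqs : (zs - ζ) * (σ * m * v) / Real.sqrt (σ ^ 4 * m ^ 2 * v ^ 2 + zs ^ 2) = ω⁻¹)
    (hz1 : ζ < z1)
    (heq1 : (z1 - ζ) * (σ1 * m * v) / Real.sqrt (σ1 ^ 4 * m ^ 2 * v ^ 2 + z1 ^ 2) = ω⁻¹)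
    (hz2 : ζ < z2)
    (heq2 : (z2 - ζ) * (σ2 * m * v) / Real.sqrt (σ2 ^ 4 * m ^ 2 * v ^ 2 + z2 ^ 2) = ω⁻¹) :
    zs ≤ max z1 z2 :=
  z_omega_sigma_max_at_endpoints_general m v ζ ω σ σ1 σ2 zs z1 z2 hm hv hζ hσ1 hσ2 hord hzs heqs hz1
    heq1 hz2 heq2
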